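/- arXiv:1410.0466 — 3 statements merged into one kernel-verified Lean document; each statement's English description precedes it below -/
import Mathlib

section
/- Let p, q be coprime positive integers with p < q and 2q ≤ 3p, and let a, d be positive integers satisfying pq ≥ (3pq - p² - q²)·a·d. Then a·d ≤ 2. -/
/-!
Write `D = 3pq - p² - q²`. For `p ≤ q ≤ 3p/2` one has
`3D - pq = (q - p)(3p - 2q) + q(3p - q) > 0`, so `D > 0` and `3D > pq ≥ D·ad`, which forces `ad < 3`.
-/

theorem mul_lt_three_mul_sub_sq_sub_sq {R : Type*} [CommRing R] [LinearOrder R]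
    [IsStrictOrderedRing R] {p q : R} (hq : 0 < q) (hpq : p ≤ q) (h : 2 * q ≤ 3 * p) :
    p * q < 3 * (3 * p * q - p ^ 2 - q ^ 2) := by
  have hdecomp : 3 * (3 * p * q - p ^ 2 - q ^ 2) - p * q =
      (q - p) * (3 * p - 2 * q) + q * (3 * p - q) := by
    ring
  have hfirst : 0 ≤ (q - p) * (3 * p - 2 * q) := mul_nonneg (sub_nonneg.2 hpq) (sub_nonneg.2 h)
  have hsecond : 0 < q * (3 * p - q) := mul_pos hq (by linarith)
  linarith

theorem kronecker_three_ad_bound_general (p q a d : ℕ)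
    (hpq : p < q) (h : 2 * q ≤ 3 * p)
    (hineq : (3 * (p : ℤ) * q - (p : ℤ) ^ 2 - (q : ℤ) ^ 2) * a * d ≤ (p : ℤ) * q) :
    a * d ≤ 2 := by
  have hq : (0 : ℤ) < q := by exact_mod_cast (Nat.zero_le p).trans_lt hpq
  have hkey : (p : ℤ) * q < 3 * (3 * p * q - p ^ 2 - q ^ 2) :=
    mul_lt_three_mul_sub_sq_sub_sq hq (by exact_mod_cast hpq.le) (by exact_mod_cast h)
  have hD : 0 < 3 * (p : ℤ) * q - p ^ 2 - q ^ 2 := by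
    have : (0 : ℤ) ≤ p * q := by positivity
    linarith
  by_contra! had
  have had' : (3 : ℤ) ≤ a * d := by exact_mod_cast had
  have := mul_le_mul_of_nonneg_left had' hD.le
  rw [← mul_assoc] at this
  linarith

/-- Let `p, q` be coprime positive integers with `p < q` and `2q ≤ 3p`, and let `a, d`
be positive integers satisfying `pq ≥ (3pq - p² - q²)·a·d`.  Then `a·d ≤ 2`. -/
theorem kronecker_three_ad_bound (p q a d : ℕ) (hp : 0 < p) (hq : 0 < q)
    (hcop : Nat.Coprime p q) (hpq : p < q) (h : 2 * q ≤ 3 * p)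
    (ha : 0 < a) (hd : 0 < d)
    (hineq : (3 * (p : ℤ) * q - (p : ℤ) ^ 2 - (q : ℤ) ^ 2) * a * d ≤ (p : ℤ) * q) :
    a * d ≤ 2 :=
  kronecker_three_ad_bound_general p q a d hpq h hineq
end

section
/- There is no pair of positive coprime integers (p, q) with p < q, 2q ≤ 3p, such that for some n ∈ {1, 2} and (a, d) ∈ {(1,1), (1,2), (2,1)} the equations pd + qa ≥ npq and nap + ndq = a² + d² + 3ad - 1 hold simultaneously. -/
/-!
For each of the six choices of `n` and `(a, d)` the Euler form condition is a linear equation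
in `p` and `q`, and the cone `p < q ≤ 3p/2` meets it in at most one point. The only choice with
a solution there is `n = 1`, `(a, d) = (2, 1)`, `(p, q) = (3, 4)`, and at that point
`npq = 12 > 11 = pd + qa`.
-/

lemma eq_three_four_of_euler_condition {p q n a d : ℤ} (hp : 0 < p) (hpq : p < q)
    (hqp : 2 * q ≤ 3 * p) (hn : n = 1 ∨ n = 2)
    (had : (a = 1 ∧ d = 1) ∨ (a = 1 ∧ d = 2) ∨ (a = 2 ∧ d = 1))
    (h : n * a * p + n * d * q = a ^ 2 + d ^ 2 + 3 * a * d - 1) :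
    n = 1 ∧ a = 2 ∧ d = 1 ∧ p = 3 ∧ q = 4 := by
  rcases hn with rfl | rfl <;> rcases had with ⟨rfl, rfl⟩ | ⟨rfl, rfl⟩ | ⟨rfl, rfl⟩ <;> omega

/-- There is no pair of positive coprime integers `(p, q)` with `p < q`, `2q ≤ 3p`, such
that for some `n ∈ {1, 2}` and `(a, d) ∈ {(1,1), (1,2), (2,1)}` the conditions
`pd + qa ≥ npq` and `nap + ndq = a² + d² + 3ad - 1` hold simultaneously. -/
theorem no_exceptional_case :
    ¬ ∃ p q n a d : ℤ, 0 < p ∧ 0 < q ∧ IsCoprime p q ∧ p < q ∧ 2 * q ≤ 3 * p ∧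
      (n = 1 ∨ n = 2) ∧
      ((a = 1 ∧ d = 1) ∨ (a = 1 ∧ d = 2) ∨ (a = 2 ∧ d = 1)) ∧
      n * p * q ≤ p * d + q * a ∧
      n * a * p + n * d * q = a ^ 2 + d ^ 2 + 3 * a * d - 1 := by
  rintro ⟨p, q, n, a, d, hp, -, -, hpq, hqp, hn, had, hle, heq⟩
  obtain ⟨rfl, rfl, rfl, rfl, rfl⟩ := eq_three_four_of_euler_condition hp hpq hqp hn had heq
  norm_num at hle
end

section
/- Every finite-dimensional representation V of a finite quiver Q admits a unique Harder–Narasimhan filtration: a chain 0 = V₀ ⊂ V₁ ⊂ … ⊂ Vₛ = V of subrepresentations such that each subquotient V_k/V_{k-1} is semistable and μ(V₁/V₀) > μ(V₂/V₁) > … > μ(Vₛ/V_{s-1}). -/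
open Module

/-- A finite-dimensional representation of a quiver with vertex set `Q0`,
arrow set `Q1`, source map `s` and target map `t`, over a field `k`. -/
structure QRep (k : Type*) [Field k] (Q0 Q1 : Type*) (s t : Q1 → Q0) where
  carrier : Q0 → Type*
  [acg : ∀ i, AddCommGroup (carrier i)]
  [mod : ∀ i, Module k (carrier i)]
  [fd : ∀ i, FiniteDimensional k (carrier i)]
  map : ∀ a, carrier (s a) →ₗ[k] carrier (t a)

attribute [instance] QRep.acg QRep.mod QRep.fd

variable {k : Type*} [Field k] {Q0 Q1 : Type*} (s t : Q1 → Q0)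

/-- A family of submodules `U i ⊆ V i` is a subrepresentation if it is stable
under all the arrow maps. -/
def QRep.IsSubrep (V : QRep k Q0 Q1 s t) (U : ∀ i, Submodule k (V.carrier i)) : Prop :=
  ∀ a, ∀ x ∈ U (s a), V.map a x ∈ U (t a)

variable [Fintype Q0]

/-- The slope (with respect to the stability `Θ`) of the subquotient `B/A` of two nested
subrepresentations `A ≤ B`, computed from the dimension vector
`(dim Bᵢ - dim Aᵢ)ᵢ` of the subquotient. -/
noncomputable def qSlope (Θ : Q0 → ℚ) (V : QRep k Q0 Q1 s t)
    (A B : ∀ i, Submodule k (V.carrier i)) : ℚ :=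
  (∑ i, Θ i * ((finrank k (B i) : ℚ) - (finrank k (A i) : ℚ))) /
    (∑ i, ((finrank k (B i) : ℚ) - (finrank k (A i) : ℚ)))

/-- `F` (together with the length `n`) is a Harder–Narasimhan filtration of `V`:
a chain `0 = F 0 ⊂ F 1 ⊂ … ⊂ F n = V` of subrepresentations (constant equal to `V`
from index `n` onwards) such that each subquotient `F (j+1) / F j` is semistable
(every intermediate subrepresentation `F j ≤ U ≤ F (j+1)` satisfies
`μ(U/F j) ≤ μ(F (j+1)/F j)`, via the correspondence between subrepresentations of the
subquotient and intermediate subrepresentations), with strictly decreasing slopes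
`μ(F 1/F 0) > μ(F 2/F 1) > … > μ(F n/F (n-1))`. -/
def IsHNFiltration (Θ : Q0 → ℚ) (V : QRep k Q0 Q1 s t)
    (n : ℕ) (F : ℕ → ∀ i, Submodule k (V.carrier i)) : Prop :=
  (F 0 = fun _ => ⊥) ∧
  (∀ j, n ≤ j → F j = fun _ => ⊤) ∧
  (∀ j, V.IsSubrep s t (F j)) ∧
  (∀ j < n, (∀ i, F j i ≤ F (j + 1) i) ∧ F j ≠ F (j + 1)) ∧
  (∀ j < n, ∀ U : ∀ i, Submodule k (V.carrier i), V.IsSubrep s t U →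
      (∀ i, F j i ≤ U i) → (∀ i, U i ≤ F (j + 1) i) → U ≠ F j →
      qSlope s t Θ V (F j) U ≤ qSlope s t Θ V (F j) (F (j + 1))) ∧
  (∀ j, j + 1 < n →
      qSlope s t Θ V (F (j + 1)) (F (j + 2)) < qSlope s t Θ V (F j) (F (j + 1)))

/-!
Replacing `Θ` by `Θ - c` turns "slope `≤ c`" into "the degree does not increase", and degrees
are additive on the modular lattice of subrepresentations:
`deg (A ⊔ B) + deg (A ⊓ B) = deg A + deg B`. Slopes of subquotients take finitely many values,
so over every proper subrepresentation `A` there is a maximal destabilizing `U`: the largest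
subrepresentation with `μ(U/A)` maximal (by modularity it contains every other one of that slope),
and the slope drops strictly past it. Conversely, in an HN filtration semistability and the strict
decrease of slopes force every subrepresentation of `V/Fⱼ` not contained in `Fⱼ₊₁/Fⱼ` to
have slope `< μ(Fⱼ₊₁/Fⱼ)`. So HN filtrations are exactly the chains of iterated maximal
destabilizing subrepresentations, which exist (the iteration stops by finite dimensionality)
and are unique.
-/

instance Pi.wellFoundedGT {ι : Type*} {α : ι → Type*} [Finite ι] [∀ i, Preorder (α i)]
    [∀ i, WellFoundedGT (α i)] : WellFoundedGT (∀ i, α i) :=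
  ⟨(Pi.wellFoundedLT (α := fun i => (α i)ᵒᵈ)).wf⟩

namespace QRep

variable {s t} {V : QRep k Q0 Q1 s t} {Θ : Q0 → ℚ} {c : ℚ}
  {A B C U W : ∀ i, Submodule k (V.carrier i)}

omit [Fintype Q0] in
theorem IsSubrep.sup (hA : V.IsSubrep s t A) (hB : V.IsSubrep s t B) :
    V.IsSubrep s t (A ⊔ B) := by
  intro a x hx
  obtain ⟨y, hy, z, hz, rfl⟩ := Submodule.mem_sup.mp hx
  rw [map_add]
  exact Submodule.add_mem_sup (hA a y hy) (hB a z hz)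

omit [Fintype Q0] in
theorem IsSubrep.inf (hA : V.IsSubrep s t A) (hB : V.IsSubrep s t B) :
    V.IsSubrep s t (A ⊓ B) :=
  fun a x hx => ⟨hA a x hx.1, hB a x hx.2⟩

omit [Fintype Q0] in
theorem isSubrep_top : V.IsSubrep s t ⊤ :=
  fun _ _ _ => trivial

omit [Fintype Q0] in
theorem isSubrep_bot : V.IsSubrep s t ⊥ := by
  intro a x hx
  rw [(Submodule.mem_bot k).mp hx, map_zero]
  exact zero_mem _

variable (V) in
noncomputable def shiftedDeg (Θ : Q0 → ℚ) (c : ℚ) (A : ∀ i, Submodule k (V.carrier i)) :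
    ℚ :=
  ∑ i, (Θ i - c) * finrank k (A i)

theorem shiftedDeg_sup_add_inf (Θ : Q0 → ℚ) (c : ℚ)
    (A B : ∀ i, Submodule k (V.carrier i)) :
    V.shiftedDeg Θ c (A ⊔ B) + V.shiftedDeg Θ c (A ⊓ B) =
      V.shiftedDeg Θ c A + V.shiftedDeg Θ c B := by
  simp only [shiftedDeg, ← Finset.sum_add_distrib, ← mul_add]
  refine Finset.sum_congr rfl fun i _ => congrArg _ ?_
  exact_mod_cast Submodule.finrank_sup_add_finrank_inf_eq (A i) (B i)

theorem shiftedDeg_sub_shiftedDeg (Θ : Q0 → ℚ) (c : ℚ)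
    (A B : ∀ i, Submodule k (V.carrier i)) :
    V.shiftedDeg Θ c B - V.shiftedDeg Θ c A =
      ∑ i, Θ i * ((finrank k (B i) : ℚ) - finrank k (A i)) -
        c * ∑ i, ((finrank k (B i) : ℚ) - finrank k (A i)) := by
  simp only [shiftedDeg, ← Finset.sum_sub_distrib, Finset.mul_sum]
  exact Finset.sum_congr rfl fun i _ => by ring

theorem sum_finrank_sub_pos (h : A < B) :
    0 < ∑ i, ((finrank k (B i) : ℚ) - finrank k (A i)) := by
  obtain ⟨hle, i, hi⟩ := Pi.lt_def.mp h
  refine Finset.sum_pos' (fun j _ => sub_nonneg.mpr ?_) ⟨i, Finset.mem_univ _, sub_pos.mpr ?_⟩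
  · exact_mod_cast Submodule.finrank_mono (hle j)
  · exact_mod_cast Submodule.finrank_lt_finrank_of_lt hi

theorem qSlope_le_iff (h : A < B) :
    qSlope s t Θ V A B ≤ c ↔ V.shiftedDeg Θ c B ≤ V.shiftedDeg Θ c A := by
  rw [qSlope, div_le_iff₀ (sum_finrank_sub_pos h), ← sub_nonpos,
    ← sub_nonpos (a := shiftedDeg ..), shiftedDeg_sub_shiftedDeg]

theorem qSlope_lt_iff (h : A < B) :
    qSlope s t Θ V A B < c ↔ V.shiftedDeg Θ c B < V.shiftedDeg Θ c A := by
  rw [qSlope, div_lt_iff₀ (sum_finrank_sub_pos h), ← sub_neg, ← sub_neg (a := shiftedDeg ..),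
    shiftedDeg_sub_shiftedDeg]

theorem le_qSlope_iff (h : A < B) :
    c ≤ qSlope s t Θ V A B ↔ V.shiftedDeg Θ c A ≤ V.shiftedDeg Θ c B := by
  rw [← not_lt, qSlope_lt_iff h, not_lt]

theorem shiftedDeg_qSlope (h : A < B) :
    V.shiftedDeg Θ (qSlope s t Θ V A B) B = V.shiftedDeg Θ (qSlope s t Θ V A B) A :=
  le_antisymm ((qSlope_le_iff h).mp le_rfl) ((le_qSlope_iff h).mp le_rfl)

-- The slope of `W/A` only depends on the dimension vector of `W`, which is bounded.
theorem finite_range_qSlope (Θ : Q0 → ℚ) (A : ∀ i, Submodule k (V.carrier i)) :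
    (Set.range (qSlope s t Θ V A)).Finite := by
  let dimVec (W : ∀ i, Submodule k (V.carrier i)) (i : Q0) : Fin (finrank k (V.carrier i) + 1) :=
    ⟨finrank k (W i), Nat.lt_succ_of_le (Submodule.finrank_le _)⟩
  refine (Set.finite_range fun d : ∀ i, Fin (finrank k (V.carrier i) + 1) =>
    (∑ i, Θ i * (((d i : ℕ) : ℚ) - finrank k (A i))) /
      ∑ i, (((d i : ℕ) : ℚ) - finrank k (A i))).subset ?_
  rintro _ ⟨W, rfl⟩
  exact ⟨dimVec W, rfl⟩

variable (V) in
def SlopesLE (Θ : Q0 → ℚ) (c : ℚ) (A B : ∀ i, Submodule k (V.carrier i)) : Prop :=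
  ∀ W, V.IsSubrep s t W → A < W → W ≤ B → qSlope s t Θ V A W ≤ c

variable (V) in
def SlopesLT (Θ : Q0 → ℚ) (c : ℚ) (A B : ∀ i, Submodule k (V.carrier i)) : Prop :=
  ∀ W, V.IsSubrep s t W → A < W → W ≤ B → qSlope s t Θ V A W < c

theorem SlopesLT.slopesLE (h : V.SlopesLT Θ c A B) : V.SlopesLE Θ c A B :=
  fun W hW hAW hWB => (h W hW hAW hWB).le

theorem slopesLT_self : V.SlopesLT Θ c A A :=
  fun _ _ hAW hWA => absurd hWA hAW.not_ge

theorem SlopesLE.shiftedDeg_le (h : V.SlopesLE Θ c A B) (hW : V.IsSubrep s t W) (hAW : A ≤ W)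
    (hWB : W ≤ B) : V.shiftedDeg Θ c W ≤ V.shiftedDeg Θ c A := by
  rcases hAW.eq_or_lt with rfl | hAW
  · exact le_rfl
  · exact (qSlope_le_iff hAW).mp (h W hW hAW hWB)

-- Modularity: `W/(W ⊓ B)` has the degree of `(W ⊔ B)/B`, which is negative as `¬ W ≤ B`.
theorem qSlope_lt_of_slopesLE_of_slopesLT (hB : V.IsSubrep s t B) (hAB : A ≤ B) (hBC : B ≤ C)
    (hle : V.SlopesLE Θ c A B) (hlt : V.SlopesLT Θ c B C) (hW : V.IsSubrep s t W) (hAW : A < W)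
    (hWC : W ≤ C) (hWB : ¬ W ≤ B) : qSlope s t Θ V A W < c := by
  have hinf := hle.shiftedDeg_le (hW.inf hB) (le_inf hAW.le hAB) inf_le_right
  have hsup := (qSlope_lt_iff (right_lt_sup.mpr hWB)).mp
    (hlt _ (hW.sup hB) (right_lt_sup.mpr hWB) (sup_le hWC hBC))
  rw [qSlope_lt_iff hAW]
  linarith [shiftedDeg_sup_add_inf Θ c W B]

theorem SlopesLT.trans (hB : V.IsSubrep s t B) (hAB : A ≤ B) (hBC : B ≤ C)
    (h₁ : V.SlopesLT Θ c A B) (h₂ : V.SlopesLT Θ c B C) : V.SlopesLT Θ c A C := by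
  intro W hW hAW hWC
  by_cases hWB : W ≤ B
  · exact h₁ W hW hAW hWB
  · exact qSlope_lt_of_slopesLE_of_slopesLT hB hAB hBC h₁.slopesLE h₂ hW hAW hWC hWB

theorem qSlope_sup_eq (hc : V.SlopesLE Θ c A ⊤) (hU : V.IsSubrep s t U) (hW : V.IsSubrep s t W)
    (hAU : A < U) (hAW : A < W) (hUc : qSlope s t Θ V A U = c) (hWc : qSlope s t Θ V A W = c) :
    qSlope s t Θ V A (U ⊔ W) = c := by
  have hAUW : A < U ⊔ W := hAU.trans_le le_sup_left
  have hU' := shiftedDeg_qSlope (Θ := Θ) hAU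
  have hW' := shiftedDeg_qSlope (Θ := Θ) hAW
  rw [hUc] at hU'
  rw [hWc] at hW'
  have hinf := hc.shiftedDeg_le (hU.inf hW) (le_inf hAU.le hAW.le) le_top
  refine le_antisymm (hc _ (hU.sup hW) hAUW le_top) ((le_qSlope_iff hAUW).mpr ?_)
  linarith [shiftedDeg_sup_add_inf Θ c U W]

variable (V) in
structure IsMaxDestabilizing (Θ : Q0 → ℚ) (A U : ∀ i, Submodule k (V.carrier i)) : Prop where
  isSubrep : V.IsSubrep s t U
  lt : A < U
  slopesLE : V.SlopesLE Θ (qSlope s t Θ V A U) A ⊤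
  le_of_le_qSlope : ∀ W, V.IsSubrep s t W → A < W →
    qSlope s t Θ V A U ≤ qSlope s t Θ V A W → W ≤ U

theorem IsMaxDestabilizing.unique {U' : ∀ i, Submodule k (V.carrier i)}
    (hU : V.IsMaxDestabilizing Θ A U) (hU' : V.IsMaxDestabilizing Θ A U') : U = U' :=
  le_antisymm (hU'.le_of_le_qSlope U hU.isSubrep hU.lt (hU.slopesLE U' hU'.isSubrep hU'.lt le_top))
    (hU.le_of_le_qSlope U' hU'.isSubrep hU'.lt (hU'.slopesLE U hU.isSubrep hU.lt le_top))

theorem IsMaxDestabilizing.qSlope_lt (hU : V.IsMaxDestabilizing Θ A U) (hW : V.IsSubrep s t W)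
    (hUW : U < W) : qSlope s t Θ V U W < qSlope s t Θ V A U := by
  by_contra! hle
  have hAW : A < W := hU.lt.trans hUW
  refine hUW.not_ge (hU.le_of_le_qSlope W hW hAW ?_)
  rw [le_qSlope_iff hAW, ← shiftedDeg_qSlope hU.lt]
  exact (le_qSlope_iff hUW).mp hle

-- Take a slope `m` that is maximal among the finitely many, then a maximal subrepresentation
-- of slope `m`; it contains all others of slope `m` since these are closed under `⊔`.
theorem exists_isMaxDestabilizing (Θ : Q0 → ℚ) (hA : A ≠ ⊤) :
    ∃ U, V.IsMaxDestabilizing Θ A U := by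
  let S := {W | V.IsSubrep s t W ∧ A < W}
  have hS : ⊤ ∈ S := ⟨isSubrep_top, lt_top_iff_ne_top.mpr hA⟩
  obtain ⟨_, ⟨U₀, hU₀, rfl⟩, hmax⟩ := Set.exists_max_image (qSlope s t Θ V A '' S) id
    ((finite_range_qSlope Θ A).subset (Set.image_subset_range _ _))
    ⟨_, Set.mem_image_of_mem _ hS⟩
  set m := qSlope s t Θ V A U₀
  have hm : V.SlopesLE Θ m A ⊤ := fun W hW hAW _ => hmax _ (Set.mem_image_of_mem _ ⟨hW, hAW⟩)
  let T := {W | V.IsSubrep s t W ∧ A < W ∧ qSlope s t Θ V A W = m}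
  obtain ⟨U, ⟨hU, hAU, hUm⟩, hUmax⟩ :=
    WellFoundedGT.exists_maximal inferInstance T ⟨U₀, hU₀.1, hU₀.2, rfl⟩
  refine ⟨U, hU, hAU, hUm ▸ hm, fun W hW hAW hle => ?_⟩
  have hWm := le_antisymm (hm W hW hAW le_top) (hUm ▸ hle)
  have hUW : U ⊔ W ∈ T :=
    ⟨hU.sup hW, hAU.trans_le le_sup_left, qSlope_sup_eq hm hU hW hAU hAW hUm hWm⟩
  exact le_sup_right.trans (hUmax hUW le_sup_left)

end QRep

namespace IsHNFiltration

open QRep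

variable {s t} {V : QRep k Q0 Q1 s t} {Θ : Q0 → ℚ} {n m j : ℕ}
  {F G : ℕ → ∀ i, Submodule k (V.carrier i)}

theorem lt_succ (hF : IsHNFiltration s t Θ V n F) (hj : j < n) : F j < F (j + 1) :=
  lt_of_le_of_ne (hF.2.2.2.1 j hj).1 (hF.2.2.2.1 j hj).2

theorem le_of_eq_top (hF : IsHNFiltration s t Θ V n F) (h : F j = ⊤) : n ≤ j :=
  le_of_not_gt fun hj => (hF.lt_succ hj).ne_top h

theorem monotone (hF : IsHNFiltration s t Θ V n F) : Monotone F := by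
  refine monotone_nat_of_le_succ fun j => ?_
  rcases lt_or_ge j n with hj | hj
  · exact (hF.lt_succ hj).le
  · rw [hF.2.1 j hj, hF.2.1 (j + 1) (by omega)]

theorem slopesLE (hF : IsHNFiltration s t Θ V n F) (hj : j < n) :
    V.SlopesLE Θ (qSlope s t Θ V (F j) (F (j + 1))) (F j) (F (j + 1)) :=
  fun W hW hjW hWj => hF.2.2.2.2.1 j hj W hW hjW.le hWj hjW.ne'

theorem qSlope_lt_qSlope (hF : IsHNFiltration s t Θ V n F) {b : ℕ} (hjb : j < b) (hb : b < n) :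
    qSlope s t Θ V (F b) (F (b + 1)) < qSlope s t Θ V (F j) (F (j + 1)) := by
  refine strictAntiOn_Iic_of_succ_lt (n := n - 1)
    (ψ := fun j => qSlope s t Θ V (F j) (F (j + 1))) (fun a ha => ?_)
    (by simp only [Set.mem_Iic]; omega) (by simp only [Set.mem_Iic]; omega) hjb
  exact hF.2.2.2.2.2 a (by omega)

theorem slopesLT_top (hF : IsHNFiltration s t Θ V n F) (hj : j < n) :
    V.SlopesLT Θ (qSlope s t Θ V (F j) (F (j + 1))) (F (j + 1)) ⊤ := by
  have hchain : ∀ b, j + 1 ≤ b → b ≤ n →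
      V.SlopesLT Θ (qSlope s t Θ V (F j) (F (j + 1))) (F (j + 1)) (F b) := by
    refine Nat.le_induction (fun _ => slopesLT_self) fun b hjb ih hbn => ?_
    refine (ih (by omega)).trans (hF.2.2.1 b) (hF.monotone hjb) (hF.monotone b.le_succ) ?_
    exact fun W hW hbW hWb => (hF.slopesLE (by omega) W hW hbW hWb).trans_lt
      (hF.qSlope_lt_qSlope (by omega) (by omega))
  have h := hchain n (by omega) le_rfl
  rwa [hF.2.1 n le_rfl] at h

theorem isMaxDestabilizing (hF : IsHNFiltration s t Θ V n F) (hj : j < n) :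
    V.IsMaxDestabilizing Θ (F j) (F (j + 1)) := by
  have hlt : ∀ W, V.IsSubrep s t W → F j < W → ¬ W ≤ F (j + 1) →
      qSlope s t Θ V (F j) W < qSlope s t Θ V (F j) (F (j + 1)) :=
    fun W hW hjW hWj => qSlope_lt_of_slopesLE_of_slopesLT (hF.2.2.1 _) (hF.lt_succ hj).le le_top
      (hF.slopesLE hj) (hF.slopesLT_top hj) hW hjW le_top hWj
  refine ⟨hF.2.2.1 _, hF.lt_succ hj, fun W hW hjW _ => ?_, fun W hW hjW hle => ?_⟩
  · by_cases hWj : W ≤ F (j + 1)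
    exacts [hF.slopesLE hj W hW hjW hWj, (hlt W hW hjW hWj).le]
  · by_contra hWj
    exact (hlt W hW hjW hWj).not_ge hle

theorem unique (hF : IsHNFiltration s t Θ V n F) (hG : IsHNFiltration s t Θ V m G) :
    n = m ∧ F = G := by
  have hFG : ∀ j, F j = G j := by
    intro j
    induction j with
    | zero => rw [hF.1, hG.1]
    | succ j ih =>
      rcases lt_or_ge j n with hjn | hjn
      · have hjm : j < m := lt_of_not_ge fun hjm =>
          hjn.not_ge (hF.le_of_eq_top (ih.trans (hG.2.1 j hjm)))
        exact (hF.isMaxDestabilizing hjn).unique (ih ▸ hG.isMaxDestabilizing hjm)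
      · have hjm : m ≤ j := hG.le_of_eq_top (ih ▸ hF.2.1 j hjn)
        rw [hF.2.1 _ (by omega), hG.2.1 _ (by omega)]
  exact ⟨le_antisymm (hF.le_of_eq_top ((hFG m).trans (hG.2.1 m le_rfl)))
    (hG.le_of_eq_top ((hFG n).symm.trans (hF.2.1 n le_rfl))), funext hFG⟩

end IsHNFiltration

namespace QRep

variable {s t} {V : QRep k Q0 Q1 s t} {Θ : Q0 → ℚ} {A : ∀ i, Submodule k (V.carrier i)}
  {n : ℕ} {F : ℕ → ∀ i, Submodule k (V.carrier i)}

theorem isHNFiltration_iff :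
    IsHNFiltration s t Θ V n F ↔
      F 0 = ⊥ ∧ (∀ j, n ≤ j → F j = ⊤) ∧
        ∀ j < n, V.IsMaxDestabilizing Θ (F j) (F (j + 1)) := by
  refine ⟨fun hF => ⟨hF.1, hF.2.1, fun j hj => hF.isMaxDestabilizing hj⟩, ?_⟩
  rintro ⟨h0, htop, hmax⟩
  refine ⟨h0, htop, fun j => ?_, fun j hj => ⟨(hmax j hj).lt.le, (hmax j hj).lt.ne⟩,
    fun j hj W hW hjW hWj hne =>
      (hmax j hj).slopesLE W hW (lt_of_le_of_ne hjW (Ne.symm hne)) le_top,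
    fun j hj => (hmax j (by omega)).qSlope_lt (hmax (j + 1) hj).isSubrep (hmax (j + 1) hj).lt⟩
  rcases j with _ | j
  · exact h0 ▸ isSubrep_bot
  · rcases lt_or_ge j n with hj | hj
    · exact (hmax j hj).isSubrep
    · exact htop (j + 1) (by omega) ▸ isSubrep_top

open Classical in
variable (V) in
noncomputable def hnStep (Θ : Q0 → ℚ) (A : ∀ i, Submodule k (V.carrier i)) :
    ∀ i, Submodule k (V.carrier i) :=
  if hA : A ≠ ⊤ then (exists_isMaxDestabilizing Θ hA).choose else ⊤

theorem isMaxDestabilizing_hnStep (hA : A ≠ ⊤) : V.IsMaxDestabilizing Θ A (V.hnStep Θ A) := by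
  rw [hnStep, dif_pos hA]
  exact (exists_isMaxDestabilizing Θ hA).choose_spec

theorem hnStep_top : V.hnStep Θ ⊤ = ⊤ := by
  rw [hnStep, dif_neg (not_not_intro rfl)]

theorem le_hnStep (A : ∀ i, Submodule k (V.carrier i)) : A ≤ V.hnStep Θ A := by
  by_cases hA : A = ⊤
  · rw [hA, hnStep_top]
  · exact (isMaxDestabilizing_hnStep hA).lt.le

-- The iterates increase strictly until they reach `⊤`, and `V` has no infinite ascending chains.
theorem exists_hnStep_iterate_eq_top : ∃ n, (V.hnStep Θ)^[n] ⊥ = ⊤ := by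
  have hmono : Monotone fun j => (V.hnStep Θ)^[j] ⊥ := monotone_nat_of_le_succ fun j => by
    simpa only [Function.iterate_succ_apply'] using le_hnStep _
  obtain ⟨n, hn⟩ := wellFoundedGT_iff_monotone_chain_condition.mp inferInstance ⟨_, hmono⟩
  refine ⟨n, by_contra fun htop => (isMaxDestabilizing_hnStep (Θ := Θ) htop).lt.ne ?_⟩
  rw [← Function.iterate_succ_apply' (V.hnStep Θ)]
  exact hn (n + 1) n.le_succ

theorem exists_isHNFiltration (Θ : Q0 → ℚ) (V : QRep k Q0 Q1 s t) :
    ∃ n F, IsHNFiltration s t Θ V n F := by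
  classical
  let n := Nat.find (exists_hnStep_iterate_eq_top (V := V) (Θ := Θ))
  refine ⟨n, fun j => (V.hnStep Θ)^[j] ⊥,
    isHNFiltration_iff.mpr ⟨rfl, fun j hj => ?_, fun j hj => ?_⟩⟩
  · induction j, hj using Nat.le_induction with
    | base => exact Nat.find_spec exists_hnStep_iterate_eq_top
    | succ j _ ih => rw [Function.iterate_succ_apply', ih, hnStep_top]
  · rw [Function.iterate_succ_apply']
    exact isMaxDestabilizing_hnStep (Nat.find_min exists_hnStep_iterate_eq_top hj)

end QRep

/-- Every finite-dimensional representation `V` of a finite quiver admits a unique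
Harder–Narasimhan filtration `0 = V₀ ⊂ V₁ ⊂ … ⊂ Vₛ = V` with semistable subquotients
of strictly decreasing slopes. -/
theorem harder_narasimhan_exists_unique (Θ : Q0 → ℚ) (V : QRep k Q0 Q1 s t) :
    ∃! nF : ℕ × (ℕ → ∀ i, Submodule k (V.carrier i)),
      IsHNFiltration s t Θ V nF.1 nF.2 := by
  obtain ⟨n, F, hF⟩ := QRep.exists_isHNFiltration Θ V
  refine ⟨(n, F), hF, fun ⟨m, G⟩ hG => ?_⟩
  obtain ⟨rfl, rfl⟩ := hG.unique hF
  rfl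
end
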